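/- Assume A ∈ R^{n×n} is invertible, M = I − A is invertible, and full AA and GMRES are applied with the same initial guess x_0 ≠ x*, with ‖r_{k−1}^G‖₂ > ‖r_k^G‖₂ strictly decreasing on the relevant range so that x_{k+1}^A = x_k^G − r_k^G. Then for full AA: (i) the minimized quantity satisfies min over γ^{(k)} of ‖M^{−1} r_{k+1}^A‖₂² = min ‖r_k^G‖₂ (i.e., r_{k+1}^A = M r_k^G and ‖M^{−1} r_{k+1}^A‖₂ = ‖r_k^G‖₂); (ii) M^{−1} r_{k+1}^A ⊥ A K_k; and (iii) if M is symmetric, then r_{k+1}^A ⊥ M^{−1} A K_k. -/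

import Mathlib

/-!
Since `q(x) = x - r(x)`, we have `r(q(x)) = M r(x)`. The AA objective at step `k` is the residual
of the mixed point `z_k = x_k + ∑ γ_i (x_k - x_{k-i})`, which ranges over the affine span of
`x_0^A, …, x_k^A`, and `x_{k+1}^A = q(z_k)`. By induction this affine span is `x_0 + K_k`:
a strict decrease of the GMRES residual at step `k` gives `r_k^G` a nonzero component along
`A^k r_0` modulo `K_k`, and `x_{k+1}^A - x_0 = (z_k - x_0) - r_k^G`. So AA and GMRES minimize the
residual norm over the same affine space, where the minimal residual is unique (it is orthogonal
to `A K_k`); hence `r(z_k) = r_k^G` and `r_{k+1}^A = M r_k^G`. Parts (ii) and (iii) are the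
orthogonality `r_k^G ⊥ A K_k`, carried through `M⁻¹`, and for symmetric `M` through `Mᵀ = M`.
-/

open Matrix Filter

noncomputable section

/-- The residual `r(x) = A x - b` of the linear system `A x = b`. -/
def residv {n : ℕ} (A : Matrix (Fin n) (Fin n) ℝ) (b x : Fin n → ℝ) : Fin n → ℝ :=
  A.mulVec x - b

/-- The Euclidean 2-norm on `Fin n → ℝ`. -/
def norm2 {n : ℕ} (x : Fin n → ℝ) : ℝ := Real.sqrt (x ⬝ᵥ x)

/-- The fixed-point map `q(x) = M x + b` with `M = I - A`. -/
def qmap {n : ℕ} (A : Matrix (Fin n) (Fin n) ℝ) (b x : Fin n → ℝ) : Fin n → ℝ :=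
  (1 - A).mulVec x + b

/-- One NGMRES update from step `k`, with window `mk` and coefficients `β`:
`x_{k+1} = q(x_k) + ∑_{i=0}^{mk} β_i (q(x_k) - x_{k-i})`. -/
def ngmresUpdate {n : ℕ} (A : Matrix (Fin n) (Fin n) ℝ) (b : Fin n → ℝ)
    (x : ℕ → Fin n → ℝ) (β : ℕ → ℝ) (k mk : ℕ) : Fin n → ℝ :=
  qmap A b (x k) + ∑ i ∈ Finset.range (mk + 1), β i • (qmap A b (x k) - x (k - i))

/-- The NGMRES iteration with window function `mk` (e.g. `mk k = min k m` for NGMRES(m),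
`mk k = k` for full NGMRES): each step uses coefficients minimizing the 2-norm of the
next residual. -/
def IsNGMRES {n : ℕ} (A : Matrix (Fin n) (Fin n) ℝ) (b x0 : Fin n → ℝ) (mk : ℕ → ℕ)
    (x : ℕ → Fin n → ℝ) (β : ℕ → ℕ → ℝ) : Prop :=
  x 0 = x0 ∧ ∀ k, x (k + 1) = ngmresUpdate A b x (β k) k (mk k) ∧
    ∀ β' : ℕ → ℝ, norm2 (residv A b (x (k + 1))) ≤
      norm2 (residv A b (ngmresUpdate A b x β' k (mk k)))

/-- The Krylov subspace `span {r0, A r0, …, A^{k-1} r0}`. -/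
def krylov {n : ℕ} (A : Matrix (Fin n) (Fin n) ℝ) (r0 : Fin n → ℝ) (k : ℕ) :
    Submodule ℝ (Fin n → ℝ) :=
  Submodule.span ℝ {v | ∃ i < k, v = (A ^ i).mulVec r0}

/-- GMRES: `x_k` minimizes the residual 2-norm over the affine space `x0 + K_k`. -/
def IsGMRES {n : ℕ} (A : Matrix (Fin n) (Fin n) ℝ) (b x0 : Fin n → ℝ)
    (x : ℕ → Fin n → ℝ) : Prop :=
  x 0 = x0 ∧ ∀ k, x k - x0 ∈ krylov A (residv A b x0) k ∧
    ∀ y : Fin n → ℝ, y - x0 ∈ krylov A (residv A b x0) k →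
      norm2 (residv A b (x k)) ≤ norm2 (residv A b y)

/-- One Anderson acceleration update from step `k`, with window `mk`:
`x_{k+1} = q(x_k) + ∑_{i=1}^{mk} γ_i (q(x_k) - q(x_{k-i}))`. -/
def aaUpdate {n : ℕ} (A : Matrix (Fin n) (Fin n) ℝ) (b : Fin n → ℝ)
    (x : ℕ → Fin n → ℝ) (γ : ℕ → ℝ) (k mk : ℕ) : Fin n → ℝ :=
  qmap A b (x k) + ∑ i ∈ Finset.Icc 1 mk, γ i • (qmap A b (x k) - qmap A b (x (k - i)))

/-- The Anderson acceleration least-squares objective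
`r(x_k) + ∑_{i=1}^{mk} γ_i (r(x_k) - r(x_{k-i}))`. -/
def aaObj {n : ℕ} (A : Matrix (Fin n) (Fin n) ℝ) (b : Fin n → ℝ)
    (x : ℕ → Fin n → ℝ) (γ : ℕ → ℝ) (k mk : ℕ) : Fin n → ℝ :=
  residv A b (x k) + ∑ i ∈ Finset.Icc 1 mk, γ i • (residv A b (x k) - residv A b (x (k - i)))

/-- Anderson acceleration with window function `mk`. -/
def IsAA {n : ℕ} (A : Matrix (Fin n) (Fin n) ℝ) (b x0 : Fin n → ℝ) (mk : ℕ → ℕ)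
    (x : ℕ → Fin n → ℝ) (γ : ℕ → ℕ → ℝ) : Prop :=
  x 0 = x0 ∧ ∀ k, x (k + 1) = aaUpdate A b x (γ k) k (mk k) ∧
    ∀ γ' : ℕ → ℝ, norm2 (aaObj A b x (γ k) k (mk k)) ≤ norm2 (aaObj A b x γ' k (mk k))

/-- The spectral norm `‖A‖₂` (the ℓ²→ℓ² operator norm). -/
def specNorm {n : ℕ} (A : Matrix (Fin n) (Fin n) ℝ) : ℝ :=
  ‖LinearMap.toContinuousLinearMap (Matrix.toEuclideanLin A)‖

/-- The spectral radius of a real matrix (computed over `ℂ`). -/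
def specRad {n : ℕ} (M : Matrix (Fin n) (Fin n) ℝ) : ℝ :=
  (spectralRadius ℂ (M.map Complex.ofReal)).toReal

theorem Submodule.sup_span_singleton_eq_of_sub_smul_mem {K V : Type*} [DivisionRing K]
    [AddCommGroup V] [Module K V] {p : Submodule K V} {v w : V} {c : K}
    (hc : c ≠ 0) (h : v - c • w ∈ p) : p ⊔ K ∙ v = p ⊔ K ∙ w := by
  have hv : v ∈ p ⊔ K ∙ w := by
    rw [← sub_add_cancel v (c • w)]
    exact Submodule.add_mem_sup h (Submodule.smul_mem _ c (Submodule.mem_span_singleton_self w))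
  have hw : w ∈ p ⊔ K ∙ v := by
    have : w = c⁻¹ • (v - (v - c • w)) := by
      rw [sub_sub_cancel, smul_smul, inv_mul_cancel₀ hc, one_smul]
    rw [this]
    exact Submodule.smul_mem _ _ (Submodule.sub_mem _ (Submodule.mem_sup_right
      (Submodule.mem_span_singleton_self v)) (Submodule.mem_sup_left h))
  exact le_antisymm (sup_le le_sup_left ((Submodule.span_singleton_le_iff_mem _ _).2 hv))
    (sup_le le_sup_left ((Submodule.span_singleton_le_iff_mem _ _).2 hw))

section Krylov

variable {n : ℕ} (A : Matrix (Fin n) (Fin n) ℝ) (r0 : Fin n → ℝ)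

theorem krylov_zero : krylov A r0 0 = ⊥ := by
  simp [krylov]

theorem krylov_succ (k : ℕ) : krylov A r0 (k + 1) = krylov A r0 k ⊔ ℝ ∙ (A ^ k) *ᵥ r0 := by
  rw [krylov, krylov, ← Submodule.span_union]
  congr 1
  ext v
  simp only [Set.mem_ofPred_eq, Set.mem_union, Set.mem_singleton_iff, Nat.lt_succ_iff_lt_or_eq,
    or_and_right, exists_or, exists_eq_left]

theorem mem_krylov_of_lt {i k : ℕ} (h : i < k) : (A ^ i) *ᵥ r0 ∈ krylov A r0 k :=
  Submodule.subset_span ⟨i, h, rfl⟩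

theorem mulVec_mem_krylov_succ {k : ℕ} {v : Fin n → ℝ} (hv : v ∈ krylov A r0 k) :
    A *ᵥ v ∈ krylov A r0 (k + 1) := by
  suffices krylov A r0 k ≤ (krylov A r0 (k + 1)).comap A.mulVecLin from this hv
  rw [krylov, Submodule.span_le]
  rintro _ ⟨i, hi, rfl⟩
  simpa [Matrix.mulVec_mulVec, ← pow_succ'] using mem_krylov_of_lt A r0 (Nat.succ_lt_succ hi)

theorem exists_sub_smul_mem_krylov {k : ℕ} {v : Fin n → ℝ} (hv : v ∈ krylov A r0 (k + 1))
    (hv' : v ∉ krylov A r0 k) : ∃ c : ℝ, c ≠ 0 ∧ v - c • (A ^ k) *ᵥ r0 ∈ krylov A r0 k := by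
  rw [krylov_succ, Submodule.mem_sup] at hv
  obtain ⟨u, hu, _, hw, rfl⟩ := hv
  obtain ⟨c, rfl⟩ := Submodule.mem_span_singleton.mp hw
  refine ⟨c, ?_, by simpa using hu⟩
  rintro rfl
  exact hv' (by simpa using hu)

theorem krylov_succ_eq_sup_of_sub_smul_mem {k : ℕ} {v : Fin n → ℝ} {c : ℝ} (hc : c ≠ 0)
    (hv : v - c • (A ^ k) *ᵥ r0 ∈ krylov A r0 k) :
    krylov A r0 (k + 1) = krylov A r0 k ⊔ ℝ ∙ v := by
  rw [krylov_succ, Submodule.sup_span_singleton_eq_of_sub_smul_mem hc hv]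

end Krylov

section EuclideanNorm

variable {n : ℕ}

theorem norm2_le_norm2_iff (u v : Fin n → ℝ) : norm2 u ≤ norm2 v ↔ u ⬝ᵥ u ≤ v ⬝ᵥ v :=
  Real.sqrt_le_sqrt_iff (Finset.sum_nonneg fun _ _ => mul_self_nonneg _)

theorem dotProduct_eq_zero_of_forall_norm2_le {u w : Fin n → ℝ}
    (h : ∀ t : ℝ, norm2 u ≤ norm2 (u + t • w)) : u ⬝ᵥ w = 0 := by
  have hexp (t : ℝ) :
      (u + t • w) ⬝ᵥ (u + t • w) = u ⬝ᵥ u + 2 * t * (u ⬝ᵥ w) + t ^ 2 * (w ⬝ᵥ w) := by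
    simp only [add_dotProduct, dotProduct_add, smul_dotProduct, dotProduct_smul, smul_eq_mul,
      dotProduct_comm w u]
    ring
  have hw : 0 ≤ w ⬝ᵥ w := Finset.sum_nonneg fun _ _ => mul_self_nonneg _
  -- test the minimality at `t = -⟪u, w⟫ / (‖w‖² + 1)`
  have := (norm2_le_norm2_iff _ _).1 (h (-(u ⬝ᵥ w) / (w ⬝ᵥ w + 1)))
  rw [hexp] at this
  have hpos : 0 < w ⬝ᵥ w + 1 := by linarith
  field_simp at this
  nlinarith [sq_nonneg (u ⬝ᵥ w), mul_nonneg hw (sq_nonneg (u ⬝ᵥ w))]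

theorem eq_of_norm2_le_of_dotProduct_sub_eq_zero {u v : Fin n → ℝ} (horth : u ⬝ᵥ (v - u) = 0)
    (hle : norm2 v ≤ norm2 u) : v = u := by
  have hexp : v ⬝ᵥ v = u ⬝ᵥ u + (v - u) ⬝ᵥ (v - u) := by
    have : v = u + (v - u) := by abel
    conv_lhs => rw [this]
    simp only [add_dotProduct, dotProduct_add, horth, dotProduct_comm (v - u) u]
    ring
  have := (norm2_le_norm2_iff _ _).1 hle
  exact sub_eq_zero.mp (dotProduct_self_eq_zero.mp (le_antisymm (by linarith)
    (Finset.sum_nonneg fun _ _ => mul_self_nonneg _)))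

end EuclideanNorm

section AndersonMixing

variable {V : Type*} [AddCommGroup V] [Module ℝ V]

/-- The point `x_k + ∑ γ_i (x_k - x_{k-i})` whose image under `q` is the AA update and whose
residual is the AA objective. -/
def aaMixing (x : ℕ → V) (γ : ℕ → ℝ) (k mk : ℕ) : V :=
  x k + ∑ i ∈ Finset.Icc 1 mk, γ i • (x k - x (k - i))

def aaDirections (x : ℕ → V) (k mk : ℕ) : Submodule ℝ V :=
  Submodule.span ℝ ((fun i => x k - x (k - i)) '' ↑(Finset.Icc 1 mk))

theorem aaMixing_sub_mem_aaDirections (x : ℕ → V) (γ : ℕ → ℝ) (k mk : ℕ) :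
    aaMixing x γ k mk - x k ∈ aaDirections x k mk := by
  rw [aaMixing, add_sub_cancel_left]
  exact Submodule.sum_mem _ fun i hi =>
    Submodule.smul_mem _ _ (Submodule.subset_span ⟨i, hi, rfl⟩)

theorem exists_aaMixing_eq {x : ℕ → V} {k mk : ℕ} {y : V}
    (hy : y - x k ∈ aaDirections x k mk) : ∃ γ : ℕ → ℝ, aaMixing x γ k mk = y := by
  obtain ⟨l, hl, hly⟩ := (Finsupp.mem_span_image_iff_linearCombination ℝ).mp hy
  refine ⟨l, ?_⟩
  rw [aaMixing, ← Finsupp.linearCombination_apply_of_mem_supported ℝ hl, hly, add_sub_cancel]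

theorem aaDirections_self_eq_span_sub_base (x : ℕ → V) (k : ℕ) :
    aaDirections x k k = Submodule.span ℝ ((fun j => x j - x 0) '' ↑(Finset.range (k + 1))) := by
  have hmem {i : ℕ} (hi : i ≤ k) : x k - x (k - i) ∈ aaDirections x k k := by
    rcases Nat.eq_zero_or_pos i with rfl | hi0
    · simp
    · exact Submodule.subset_span ⟨i, Finset.mem_Icc.2 ⟨hi0, hi⟩, rfl⟩
  refine le_antisymm (Submodule.span_le.2 ?_) (Submodule.span_le.2 ?_)
  · rintro _ ⟨i, hi, rfl⟩
    show x k - x (k - i) ∈ _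
    rw [← sub_sub_sub_cancel_right _ _ (x 0)]
    exact Submodule.sub_mem _ (Submodule.subset_span ⟨k, by simp, rfl⟩)
      (Submodule.subset_span ⟨k - i, by simp, rfl⟩)
  · rintro _ ⟨j, hj, rfl⟩
    have hjk : j ≤ k := Nat.lt_succ_iff.1 (Finset.mem_range.1 hj)
    have := Submodule.sub_mem _ (hmem le_rfl) (hmem (Nat.sub_le k j))
    rwa [Nat.sub_self, Nat.sub_sub_self hjk, sub_sub_sub_cancel_left] at this

end AndersonMixing

section FixedPoint

variable {n : ℕ} (A : Matrix (Fin n) (Fin n) ℝ) (b : Fin n → ℝ)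

theorem residv_eq_add_mulVec_sub (x y : Fin n → ℝ) :
    residv A b y = residv A b x + A *ᵥ (y - x) := by
  simp only [residv, mulVec_sub]
  abel

theorem qmap_eq_sub_residv (x : Fin n → ℝ) : qmap A b x = x - residv A b x := by
  simp only [qmap, residv, sub_mulVec, one_mulVec]
  abel

theorem residv_qmap (x : Fin n → ℝ) : residv A b (qmap A b x) = (1 - A) *ᵥ residv A b x := by
  rw [residv_eq_add_mulVec_sub A b x, qmap_eq_sub_residv, sub_sub_cancel_left, mulVec_neg,
    sub_mulVec, one_mulVec]
  abel

theorem aaUpdate_eq_qmap_aaMixing (x : ℕ → Fin n → ℝ) (γ : ℕ → ℝ) (k mk : ℕ) :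
    aaUpdate A b x γ k mk = qmap A b (aaMixing x γ k mk) := by
  simp only [aaUpdate, aaMixing, qmap, mulVec_add, mulVec_sum, mulVec_smul, mulVec_sub,
    add_sub_add_right_eq_sub]
  abel

theorem aaObj_eq_residv_aaMixing (x : ℕ → Fin n → ℝ) (γ : ℕ → ℝ) (k mk : ℕ) :
    aaObj A b x γ k mk = residv A b (aaMixing x γ k mk) := by
  simp only [aaObj, aaMixing, residv, mulVec_add, mulVec_sum, mulVec_smul, mulVec_sub,
    sub_sub_sub_cancel_right]
  abel
end FixedPoint

section Iterations

variable {n : ℕ} {A : Matrix (Fin n) (Fin n) ℝ} {b x0 : Fin n → ℝ}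

theorem IsGMRES.dotProduct_mulVec_eq_zero {xG : ℕ → Fin n → ℝ} (hG : IsGMRES A b x0 xG)
    {k : ℕ} {w : Fin n → ℝ} (hw : w ∈ krylov A (residv A b x0) k) :
    residv A b (xG k) ⬝ᵥ A *ᵥ w = 0 := by
  refine dotProduct_eq_zero_of_forall_norm2_le fun t => ?_
  have := (hG.2 k).2 (xG k + t • w) (by
    rw [add_sub_right_comm]
    exact add_mem (hG.2 k).1 (Submodule.smul_mem _ t hw))
  rwa [residv_eq_add_mulVec_sub A b (xG k) (xG k + t • w), add_sub_cancel_left, mulVec_smul]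
    at this

theorem IsGMRES.residv_eq_of_norm2_le {xG : ℕ → Fin n → ℝ} (hG : IsGMRES A b x0 xG)
    {k : ℕ} {y : Fin n → ℝ} (hy : y - x0 ∈ krylov A (residv A b x0) k)
    (hle : norm2 (residv A b y) ≤ norm2 (residv A b (xG k))) :
    residv A b y = residv A b (xG k) := by
  refine eq_of_norm2_le_of_dotProduct_sub_eq_zero ?_ hle
  rw [residv_eq_add_mulVec_sub A b (xG k) y, add_sub_cancel_left]
  refine hG.dotProduct_mulVec_eq_zero ?_
  rw [← sub_sub_sub_cancel_right y (xG k) x0]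
  exact sub_mem hy (hG.2 k).1

theorem IsGMRES.exists_residv_sub_smul_mem_krylov {xG : ℕ → Fin n → ℝ} (hG : IsGMRES A b x0 xG)
    {k : ℕ} (hdec : 0 < k → norm2 (residv A b (xG k)) < norm2 (residv A b (xG (k - 1)))) :
    ∃ c : ℝ, c ≠ 0 ∧
      residv A b (xG k) - c • (A ^ k) *ᵥ residv A b x0 ∈ krylov A (residv A b x0) k := by
  cases k with
  | zero => exact ⟨1, one_ne_zero, by simp [hG.1]⟩
  | succ j =>
    have hd : xG (j + 1) - x0 ∉ krylov A (residv A b x0) j := fun hmem =>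
      (hdec j.succ_pos).not_ge ((hG.2 j).2 _ hmem)
    obtain ⟨c, hc, hmem⟩ := exists_sub_smul_mem_krylov A _ (hG.2 (j + 1)).1 hd
    refine ⟨c, hc, ?_⟩
    have hr0 : residv A b x0 ∈ krylov A (residv A b x0) (j + 1) := by
      simpa using mem_krylov_of_lt A (residv A b x0) j.succ_pos
    have hsplit : residv A b (xG (j + 1)) - c • (A ^ (j + 1)) *ᵥ residv A b x0 =
        residv A b x0 + A *ᵥ (xG (j + 1) - x0 - c • (A ^ j) *ᵥ residv A b x0) := by
      simp only [residv_eq_add_mulVec_sub A b x0 (xG (j + 1)), mulVec_sub, mulVec_smul,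
        mulVec_mulVec, ← pow_succ']
      abel
    rw [hsplit]
    exact add_mem hr0 (mulVec_mem_krylov_succ A _ hmem)

variable {xA xG : ℕ → Fin n → ℝ} {γ : ℕ → ℕ → ℝ}

theorem IsAA.aaObj_eq_residv_of_span_eq (hAA : IsAA A b x0 (fun k => k) xA γ)
    (hG : IsGMRES A b x0 xG) {k : ℕ}
    (hspan : Submodule.span ℝ ((fun j => xA j - x0) '' ↑(Finset.range (k + 1))) =
      krylov A (residv A b x0) k) :
    aaMixing xA (γ k) k k - x0 ∈ krylov A (residv A b x0) k ∧
      aaObj A b xA (γ k) k k = residv A b (xG k) := by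
  have hdir : aaDirections xA k k = krylov A (residv A b x0) k := by
    rw [aaDirections_self_eq_span_sub_base, hAA.1, hspan]
  have hxk : xA k - x0 ∈ krylov A (residv A b x0) k :=
    hspan ▸ Submodule.subset_span ⟨k, by simp, rfl⟩
  have hz : aaMixing xA (γ k) k k - x0 ∈ krylov A (residv A b x0) k := by
    rw [← sub_add_sub_cancel _ (xA k)]
    exact add_mem (hdir ▸ aaMixing_sub_mem_aaDirections xA (γ k) k k) hxk
  obtain ⟨γ', hγ'⟩ := exists_aaMixing_eq (y := xG k) (by
    rw [hdir, ← sub_sub_sub_cancel_right _ _ x0]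
    exact sub_mem (hG.2 k).1 hxk)
  refine ⟨hz, ?_⟩
  have hmin := (hAA.2 k).2 γ'
  rw [aaObj_eq_residv_aaMixing, aaObj_eq_residv_aaMixing, hγ'] at hmin
  rw [aaObj_eq_residv_aaMixing]
  exact hG.residv_eq_of_norm2_le hz hmin

theorem IsAA.span_eq_krylov (hAA : IsAA A b x0 (fun k => k) xA γ) (hG : IsGMRES A b x0 xG)
    {k0 : ℕ} (hdec : ∀ k, 0 < k → k < k0 →
      norm2 (residv A b (xG k)) < norm2 (residv A b (xG (k - 1)))) :
    ∀ k < k0, Submodule.span ℝ ((fun j => xA j - x0) '' ↑(Finset.range (k + 1))) =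
      krylov A (residv A b x0) k := by
  intro k
  induction k with
  | zero => intro _; simp [krylov_zero, hAA.1]
  | succ k ih =>
    intro hk
    obtain ⟨hz, hobj⟩ := hAA.aaObj_eq_residv_of_span_eq hG (ih (by omega))
    obtain ⟨c, hc, hr⟩ := hG.exists_residv_sub_smul_mem_krylov (hdec k · (by omega))
    -- `x_{k+1}^A = q(z) = z - r_k^G`, whose component along `A ^ k r₀` is `-c`
    have hnext : xA (k + 1) - x0 - (-c) • (A ^ k) *ᵥ residv A b x0 =
        (aaMixing xA (γ k) k k - x0) - (residv A b (xG k) - c • (A ^ k) *ᵥ residv A b x0) := by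
      rw [(hAA.2 k).1, aaUpdate_eq_qmap_aaMixing, qmap_eq_sub_residv,
        ← aaObj_eq_residv_aaMixing, hobj, neg_smul]
      abel
    rw [Finset.range_add_one, Finset.coe_insert, Set.image_insert_eq, Submodule.span_insert,
      ih (by omega), sup_comm,
      krylov_succ_eq_sup_of_sub_smul_mem A _ (neg_ne_zero.2 hc) (hnext ▸ sub_mem hz hr)]

end Iterations

theorem stmt8_general (n : ℕ) (A : Matrix (Fin n) (Fin n) ℝ) (b x0 : Fin n → ℝ)
    (hM : IsUnit (1 - A).det)
    (xA xG : ℕ → Fin n → ℝ) (γ : ℕ → ℕ → ℝ)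
    (hAA : IsAA A b x0 (fun k => k) xA γ)
    (hG : IsGMRES A b x0 xG)
    (k0 : ℕ)
    (hdec : ∀ k, 0 < k → k < k0 →
      norm2 (residv A b (xG k)) < norm2 (residv A b (xG (k - 1)))) :
    ∀ k, k < k0 →
      (residv A b (xA (k + 1)) = (1 - A).mulVec (residv A b (xG k)) ∧
        norm2 ((1 - A)⁻¹.mulVec (residv A b (xA (k + 1)))) = norm2 (residv A b (xG k))) ∧
      (∀ v ∈ krylov A (residv A b x0) k,
        (1 - A)⁻¹.mulVec (residv A b (xA (k + 1))) ⬝ᵥ A.mulVec v = 0) ∧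
      ((1 - A).IsSymm → ∀ v ∈ krylov A (residv A b x0) k,
        residv A b (xA (k + 1)) ⬝ᵥ (1 - A)⁻¹.mulVec (A.mulVec v) = 0) := by
  intro k hk
  have hobj := (hAA.aaObj_eq_residv_of_span_eq hG (hAA.span_eq_krylov hG hdec k hk)).2
  have hres : residv A b (xA (k + 1)) = (1 - A) *ᵥ residv A b (xG k) := by
    rw [(hAA.2 k).1, aaUpdate_eq_qmap_aaMixing, residv_qmap, ← aaObj_eq_residv_aaMixing, hobj]
  have hMinv : (1 - A)⁻¹ *ᵥ residv A b (xA (k + 1)) = residv A b (xG k) := by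
    rw [hres, mulVec_mulVec, nonsing_inv_mul _ hM, one_mulVec]
  refine ⟨⟨hres, by rw [hMinv]⟩, fun v hv => hMinv ▸ hG.dotProduct_mulVec_eq_zero hv,
    fun hsym v hv => ?_⟩
  have hself (u w : Fin n → ℝ) : (1 - A) *ᵥ u ⬝ᵥ w = u ⬝ᵥ (1 - A) *ᵥ w := by
    rw [dotProduct_mulVec, ← mulVec_transpose, hsym.eq]
  rw [hres, hself, mulVec_mulVec, mul_nonsing_inv _ hM, one_mulVec]
  exact hG.dotProduct_mulVec_eq_zero hv

/-- for full AA with `A` and `M = I - A` invertible (under the hypotheses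
guaranteeing `x_{k+1}^A = x_k^G - r_k^G`): (i) `r_{k+1}^A = M r_k^G` and
`‖M⁻¹ r_{k+1}^A‖ = ‖r_k^G‖`; (ii) `M⁻¹ r_{k+1}^A ⊥ A K_k`;
(iii) if `M` is symmetric then `r_{k+1}^A ⊥ M⁻¹ A K_k`. -/
theorem stmt8 (n : ℕ) (A : Matrix (Fin n) (Fin n) ℝ) (b x0 xstar : Fin n → ℝ)
    (hA : IsUnit A.det) (hM : IsUnit (1 - A).det)
    (xA xG : ℕ → Fin n → ℝ) (γ : ℕ → ℕ → ℝ)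
    (hAA : IsAA A b x0 (fun k => k) xA γ)
    (hG : IsGMRES A b x0 xG)
    (hstar : A.mulVec xstar = b) (hx0 : x0 ≠ xstar)
    (k0 : ℕ) (hk0 : 0 < k0)
    (hrk0 : residv A b (xG (k0 - 1)) ≠ 0)
    (hdec : ∀ k, 0 < k → k < k0 →
      norm2 (residv A b (xG k)) < norm2 (residv A b (xG (k - 1)))) :
    ∀ k, k < k0 →
      (residv A b (xA (k + 1)) = (1 - A).mulVec (residv A b (xG k)) ∧
        norm2 ((1 - A)⁻¹.mulVec (residv A b (xA (k + 1)))) = norm2 (residv A b (xG k))) ∧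
      (∀ v ∈ krylov A (residv A b x0) k,
        (1 - A)⁻¹.mulVec (residv A b (xA (k + 1))) ⬝ᵥ A.mulVec v = 0) ∧
      ((1 - A).IsSymm → ∀ v ∈ krylov A (residv A b x0) k,
        residv A b (xA (k + 1)) ⬝ᵥ (1 - A)⁻¹.mulVec (A.mulVec v) = 0) :=
  stmt8_general n A b x0 hM xA xG γ hAA hG k0 hdec

end
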